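/- arXiv:2011.02823 — 7 statements merged into one kernel-verified Lean document; each statement's English description precedes it below -/
import Mathlib

section
/- Let ξ ∈ ℝ with ξ ≠ 0 and let η ∈ ℝ satisfy η ≥ −(1+ξ²)/2. For every (n₀, φ) ∈ ℝ × ℝ with h(ξ, n₀, φ) = η, the square of the phase-derivative of h satisfies (4 n₀(1−n₀) cos φ sin φ)² = 16 ξ (n₀ − z₀)(n₀ − z₊)(n₀ − z₋). In particular, along any solution of Hamilton's equations with energy η one has (dn₀/dτ)² = 16 ξ (n₀ − z₀)(n₀ − z₊)(n₀ − z₋). -/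
/-- Dimensionless mean-field Hamiltonian of a ferromagnetic spin-1 BEC with
zero magnetization. -/
noncomputable def hmf (ξ n₀ φ : ℝ) : ℝ :=
  ξ * (1 - 2 * n₀) - 2 * n₀ * (1 - n₀) * Real.cos φ ^ 2

/-!
On the energy surface `h = η` one has `2 n₀ (1 - n₀) cos² φ = ξ (1 - 2 n₀) - η`, so the square of
`∂h/∂φ = 4 n₀ (1 - n₀) cos φ sin φ`, written via `sin² = 1 - cos²`, becomes a cubic polynomial in
`n₀` alone; its roots are `z₀`, `z₊`, `z₋`. Along a Hamiltonian trajectory the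
energy is conserved, so the identity holds at every time.
-/

open Real

/-- The right-hand side `∂h/∂φ` of Hamilton's equation for `n₀`. -/
noncomputable def populationRate (n φ : ℝ) : ℝ :=
  4 * n * (1 - n) * cos φ * sin φ

/-- The right-hand side `-∂h/∂n₀` of Hamilton's equation for `φ`. -/
noncomputable def phaseRate (ξ n φ : ℝ) : ℝ :=
  2 * ξ + 2 * (1 - 2 * n) * cos φ ^ 2

theorem populationRate_sq (ξ n φ : ℝ) :
    populationRate n φ ^ 2 =
      8 * (2 * ξ * n - ξ + hmf ξ n φ) * (n ^ 2 - (1 + ξ) * n + (ξ - hmf ξ n φ) / 2) := by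
  unfold populationRate hmf
  linear_combination (16 * (n * (1 - n)) ^ 2 * cos φ ^ 2) * sin_sq_add_cos_sq φ

theorem sub_mul_sub_of_sqrt (x b d : ℝ) (hd : 0 ≤ d) :
    (x - (b + √d) / 2) * (x - (b - √d) / 2) = x ^ 2 - b * x + (b ^ 2 - d) / 4 := by
  linear_combination (-1 / 4 : ℝ) * sq_sqrt hd

theorem HasDerivAt.hmf_comp {ξ n' φ' t : ℝ} {n φ : ℝ → ℝ} (hn : HasDerivAt n n' t)
    (hφ : HasDerivAt φ φ' t) :
    HasDerivAt (fun s ↦ hmf ξ (n s) (φ s))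
      (populationRate (n t) (φ t) * φ' - phaseRate ξ (n t) (φ t) * n') t := by
  have h := ((hn.const_mul 2).const_sub 1 |>.const_mul ξ).sub
    (((hn.const_mul 2).mul (hn.const_sub 1)).mul (hφ.cos.pow 2))
  refine h.congr_deriv ?_
  simp only [populationRate, phaseRate, Pi.mul_apply, Pi.pow_apply]
  ring

theorem hmf_eq_of_hamilton {ξ : ℝ} {n φ : ℝ → ℝ} (hn : Differentiable ℝ n)
    (hφ : Differentiable ℝ φ) (hn' : ∀ t, deriv n t = populationRate (n t) (φ t))
    (hφ' : ∀ t, deriv φ t = phaseRate ξ (n t) (φ t)) (t s : ℝ) :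
    hmf ξ (n t) (φ t) = hmf ξ (n s) (φ s) := by
  have hderiv : ∀ u, HasDerivAt (fun s ↦ hmf ξ (n s) (φ s)) 0 u := fun u ↦ by
    convert (hn u).hasDerivAt.hmf_comp (hφ u).hasDerivAt using 1
    rw [hn' u, hφ' u]
    ring
  exact is_const_of_deriv_eq_zero (fun u ↦ (hderiv u).differentiableAt)
    (fun u ↦ (hderiv u).deriv) t s

theorem stmt_7 (ξ η : ℝ) (hξ : ξ ≠ 0) (hη : -(1 + ξ ^ 2) / 2 ≤ η)
    (z₀ zp zm : ℝ) (hz0 : z₀ = (1 - η / ξ) / 2)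
    (hzp : zp = (1 + ξ + Real.sqrt (1 + ξ ^ 2 + 2 * η)) / 2)
    (hzm : zm = (1 + ξ - Real.sqrt (1 + ξ ^ 2 + 2 * η)) / 2) :
    (∀ n₀ φ : ℝ, hmf ξ n₀ φ = η →
      (4 * n₀ * (1 - n₀) * Real.cos φ * Real.sin φ) ^ 2 =
        16 * ξ * (n₀ - z₀) * (n₀ - zp) * (n₀ - zm)) ∧
    (∀ n₀ φ : ℝ → ℝ, Differentiable ℝ n₀ → Differentiable ℝ φ →
      (∀ τ, deriv n₀ τ =
        4 * n₀ τ * (1 - n₀ τ) * Real.cos (φ τ) * Real.sin (φ τ)) →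
      (∀ τ, deriv φ τ =
        2 * ξ + 2 * (1 - 2 * n₀ τ) * Real.cos (φ τ) ^ 2) →
      hmf ξ (n₀ 0) (φ 0) = η →
      ∀ τ, (deriv n₀ τ) ^ 2 =
        16 * ξ * (n₀ τ - z₀) * (n₀ τ - zp) * (n₀ τ - zm)) := by
  have energy_surface : ∀ n₀ φ : ℝ, hmf ξ n₀ φ = η →
      populationRate n₀ φ ^ 2 = 16 * ξ * (n₀ - z₀) * (n₀ - zp) * (n₀ - zm) := by
    intro n₀ φ hE
    have hroots := sub_mul_sub_of_sqrt n₀ (1 + ξ) (1 + ξ ^ 2 + 2 * η) (by nlinarith)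
    have hcenter : 2 * ξ * z₀ = ξ - η := by
      rw [hz0]
      field_simp
    rw [populationRate_sq, hE, hzp, hzm]
    linear_combination (8 * (n₀ ^ 2 - (1 + ξ) * n₀ + (ξ - η) / 2)) * hcenter
      - 16 * ξ * (n₀ - z₀) * hroots
  refine ⟨energy_surface, fun n₀ φ hn hφ hn' hφ' h0 τ ↦ ?_⟩
  rw [hn' τ]
  exact energy_surface _ _ <| h0 ▸ hmf_eq_of_hamilton hn hφ hn' hφ' τ 0
end

section
/- Let ξ ∈ ℝ with 0 < |ξ| < 1 and let η ∈ ℝ with −(1+ξ²)/2 ≤ η < −|ξ| (the BA′ excited-state quantum phase). Then: if ξ > 0 the roots satisfy z₋ ≤ z₊ ≤ z₀, and if ξ < 0 they satisfy z₀ ≤ z₋ ≤ z₊. -/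
/-! Clearing the denominator ξ, both orderings reduce to `|ξ| √(1 + ξ² + 2η) ≤ -(η + ξ²)`.
The right side is positive because `η < -|ξ|` and `|ξ| ≤ 1`, and after squaring the inequality
becomes `ξ² ≤ η²`. -/

theorem abs_mul_sqrt_le_neg_add_sq {a η : ℝ} (ha : |a| ≤ 1) (hη : η < -|a|) :
    |a| * √(1 + a ^ 2 + 2 * η) ≤ -(η + a ^ 2) := by
  have hrhs : 0 ≤ -(η + a ^ 2) := by nlinarith [abs_nonneg a, sq_abs a]
  rw [← Real.sqrt_sq_eq_abs, ← Real.sqrt_mul (sq_nonneg a), Real.sqrt_le_iff]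
  exact ⟨hrhs, by nlinarith [abs_nonneg a, sq_abs a]⟩

theorem stmt_9_general (ξ η : ℝ) (hξ1 : |ξ| < 1)
    (hη2 : η < -|ξ|)
    (z₀ zp zm : ℝ) (hz0 : z₀ = (1 - η / ξ) / 2)
    (hzp : zp = (1 + ξ + Real.sqrt (1 + ξ ^ 2 + 2 * η)) / 2)
    (hzm : zm = (1 + ξ - Real.sqrt (1 + ξ ^ 2 + 2 * η)) / 2) :
    (0 < ξ → zm ≤ zp ∧ zp ≤ z₀) ∧ (ξ < 0 → z₀ ≤ zm ∧ zm ≤ zp) := by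
  subst hz0 hzp hzm
  have key := abs_mul_sqrt_le_neg_add_sq hξ1.le hη2
  have hs := Real.sqrt_nonneg (1 + ξ ^ 2 + 2 * η)
  refine ⟨fun hpos => ⟨by linarith, ?_⟩, fun hneg => ⟨?_, by linarith⟩⟩
  · rw [abs_of_pos hpos] at key
    have : η / ξ ≤ -(ξ + √(1 + ξ ^ 2 + 2 * η)) := by
      rw [div_le_iff₀ hpos]
      linarith
    linarith
  · rw [abs_of_neg hneg] at key
    have : √(1 + ξ ^ 2 + 2 * η) - ξ ≤ η / ξ := by
      rw [le_div_iff_of_neg hneg]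
      linarith
    linarith

theorem stmt_9 (ξ η : ℝ) (hξ : 0 < |ξ|) (hξ1 : |ξ| < 1)
    (hη1 : -(1 + ξ ^ 2) / 2 ≤ η) (hη2 : η < -|ξ|)
    (z₀ zp zm : ℝ) (hz0 : z₀ = (1 - η / ξ) / 2)
    (hzp : zp = (1 + ξ + Real.sqrt (1 + ξ ^ 2 + 2 * η)) / 2)
    (hzm : zm = (1 + ξ - Real.sqrt (1 + ξ ^ 2 + 2 * η)) / 2) :
    (0 < ξ → zm ≤ zp ∧ zp ≤ z₀) ∧ (ξ < 0 → z₀ ≤ zm ∧ zm ≤ zp) :=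
  stmt_9_general ξ η hξ1 hη2 z₀ zp zm hz0 hzp hzm
end

section
/- Let ξ ∈ (0,1) and η ∈ (−ξ, ξ) (the P′ excited-state quantum phase). Then the projection of the energy level set onto the n₀-axis is the closed interval [z₋, z₀]: {n₀ ∈ [0,1] : ∃ φ ∈ ℝ, h(ξ, n₀, φ) = η} = [z₋, z₀], where z₀ = (1 − η/ξ)/2 and z₋ = (1 + ξ − √(1+ξ²+2η))/2. -/
open Real Set

theorem exists_sub_mul_cos_sq_eq_iff {a b c : ℝ} (hb : 0 ≤ b) :
    (∃ φ, a - b * cos φ ^ 2 = c) ↔ c ∈ Icc (a - b) a := by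
  constructor
  · rintro ⟨φ, rfl⟩
    have hcos_sq : cos φ ^ 2 ≤ 1 := by rw [sq_le_one_iff_abs_le_one]; exact abs_cos_le_one φ
    constructor <;> nlinarith [sq_nonneg (cos φ)]
  · intro hc
    have hcont : ContinuousOn (fun φ ↦ a - b * cos φ ^ 2) (Icc 0 (π / 2)) := by fun_prop
    obtain ⟨φ, -, hφ⟩ :=
      intermediate_value_Icc (by positivity) hcont (by simpa using hc)
    exact ⟨φ, hφ⟩

theorem exists_hmf_eq_iff {ξ n₀ η : ℝ} (hn₀ : n₀ ∈ Icc 0 1) :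
    (∃ φ, hmf ξ n₀ φ = η) ↔
      ξ * (1 - 2 * n₀) - 2 * n₀ * (1 - n₀) ≤ η ∧ η ≤ ξ * (1 - 2 * n₀) :=
  exists_sub_mul_cos_sq_eq_iff (by nlinarith [hn₀.1, hn₀.2])

theorem mul_one_sub_two_mul_sub_le_iff {ξ n₀ η : ℝ} (hD : 0 ≤ 1 + ξ ^ 2 + 2 * η) :
    ξ * (1 - 2 * n₀) - 2 * n₀ * (1 - n₀) ≤ η ↔
      (1 + ξ - √(1 + ξ ^ 2 + 2 * η)) / 2 ≤ n₀ ∧ n₀ ≤ (1 + ξ + √(1 + ξ ^ 2 + 2 * η)) / 2 := by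
  have hsq : ξ * (1 - 2 * n₀) - 2 * n₀ * (1 - n₀) ≤ η ↔
      (2 * n₀ - (1 + ξ)) ^ 2 ≤ 1 + ξ ^ 2 + 2 * η := by
    constructor <;> intro h <;> linarith
  rw [hsq, Real.sq_le hD]
  constructor <;> rintro ⟨h₁, h₂⟩ <;> constructor <;> linarith

theorem le_mul_one_sub_two_mul_iff {ξ n₀ η : ℝ} (hξ : 0 < ξ) :
    η ≤ ξ * (1 - 2 * n₀) ↔ n₀ ≤ (1 - η / ξ) / 2 := by
  rw [le_div_iff₀ two_pos, le_sub_comm, div_le_iff₀ hξ]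
  constructor <;> intro h <;> linarith

theorem stmt_10 (ξ η : ℝ) (hξ : ξ ∈ Set.Ioo (0 : ℝ) 1)
    (hη : η ∈ Set.Ioo (-ξ) ξ) :
    {n₀ : ℝ | n₀ ∈ Set.Icc (0 : ℝ) 1 ∧ ∃ φ : ℝ, hmf ξ n₀ φ = η} =
      Set.Icc ((1 + ξ - Real.sqrt (1 + ξ ^ 2 + 2 * η)) / 2) ((1 - η / ξ) / 2) := by
  obtain ⟨hξ0, hξ1⟩ := hξ
  obtain ⟨hηξ, hξη⟩ := hη
  have hD : 0 ≤ 1 + ξ ^ 2 + 2 * η := by nlinarith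
  have hs_gt : 1 - ξ < √(1 + ξ ^ 2 + 2 * η) := (lt_sqrt (by linarith)).mpr (by nlinarith)
  have hs_lt : √(1 + ξ ^ 2 + 2 * η) < 1 + ξ := (sqrt_lt' (by linarith)).mpr (by nlinarith)
  have hz₀_lt : (1 - η / ξ) / 2 < 1 := by
    have : -1 < η / ξ := by rw [lt_div_iff₀ hξ0]; linarith
    linarith
  ext n₀
  rw [mem_ofPred_eq, and_congr_right exists_hmf_eq_iff, mul_one_sub_two_mul_sub_le_iff hD,
    le_mul_one_sub_two_mul_iff hξ0]
  constructor
  · rintro ⟨-, ⟨h₁, -⟩, h₂⟩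
    exact ⟨h₁, h₂⟩
  · rintro ⟨h₁, h₂⟩
    exact ⟨⟨by linarith, by linarith⟩, ⟨h₁, by linarith⟩, h₂⟩
end

section
/- Let ξ ∈ (0,1) and η ∈ (−(1+ξ²)/2, −ξ) (the BA′ excited-state quantum phase). Then the projection of the energy level set onto the n₀-axis is the closed interval [z₋, z₊]: {n₀ ∈ [0,1] : ∃ φ ∈ ℝ, h(ξ, n₀, φ) = η} = [z₋, z₊], where z± = (1 + ξ ± √(1+ξ²+2η))/2. -/
open Real Set

noncomputable def zZero (ξ η : ℝ) : ℝ := (1 - η / ξ) / 2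

noncomputable def zMinus (ξ η : ℝ) : ℝ := (1 + ξ - √(1 + ξ ^ 2 + 2 * η)) / 2

noncomputable def zPlus (ξ η : ℝ) : ℝ := (1 + ξ + √(1 + ξ ^ 2 + 2 * η)) / 2

theorem range_hmf {ξ n₀ : ℝ} (h0 : 0 ≤ n₀) (h1 : n₀ ≤ 1) :
    range (hmf ξ n₀) = Icc (ξ * (1 - 2 * n₀) - 2 * n₀ * (1 - n₀)) (ξ * (1 - 2 * n₀)) := by
  refine Subset.antisymm (range_subset_iff.2 fun φ => ?_) ?_
  · have hn : 0 ≤ n₀ * (1 - n₀) := mul_nonneg h0 (by linarith)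
    unfold hmf
    constructor <;> nlinarith [cos_sq_le_one φ, sq_nonneg (cos φ)]
  · have hivt := intermediate_value_Icc pi_div_two_pos.le
      (f := hmf ξ n₀) (by unfold hmf; fun_prop)
    simp only [hmf, cos_zero, cos_pi_div_two] at hivt
    simpa using hivt.trans (image_subset_range _ _)

theorem sub_le_iff_mem_Icc_zMinus_zPlus {ξ η n₀ : ℝ} (hD : 0 ≤ 1 + ξ ^ 2 + 2 * η) :
    ξ * (1 - 2 * n₀) - 2 * n₀ * (1 - n₀) ≤ η ↔ n₀ ∈ Icc (zMinus ξ η) (zPlus ξ η) := by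
  have hquad : ξ * (1 - 2 * n₀) - 2 * n₀ * (1 - n₀) ≤ η ↔
      (2 * n₀ - 1 - ξ) ^ 2 ≤ √(1 + ξ ^ 2 + 2 * η) ^ 2 := by
    rw [sq_sqrt hD]
    constructor <;> intro h <;> nlinarith
  rw [hquad, sq_le_sq, abs_of_nonneg (sqrt_nonneg _), abs_le, zMinus, zPlus, mem_Icc]
  constructor <;> rintro ⟨_, _⟩ <;> constructor <;> linarith

theorem le_mul_one_sub_two_mul_iff_le_zZero {ξ η n₀ : ℝ} (hξ : 0 < ξ) :
    η ≤ ξ * (1 - 2 * n₀) ↔ n₀ ≤ zZero ξ η := by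
  rw [zZero, le_div_iff₀ two_pos, le_sub_comm, div_le_iff₀ hξ]
  constructor <;> intro h <;> linarith

theorem sqrt_le_one_sub {ξ η : ℝ} (hξ : ξ ≤ 1) (hη : η ≤ -ξ) :
    √(1 + ξ ^ 2 + 2 * η) ≤ 1 - ξ :=
  (sqrt_le_left (by linarith)).2 (by nlinarith)

theorem stmt_11 (ξ η : ℝ) (hξ : ξ ∈ Set.Ioo (0 : ℝ) 1)
    (hη : η ∈ Set.Ioo (-(1 + ξ ^ 2) / 2) (-ξ)) :
    {n₀ : ℝ | n₀ ∈ Set.Icc (0 : ℝ) 1 ∧ ∃ φ : ℝ, hmf ξ n₀ φ = η} =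
      Set.Icc ((1 + ξ - Real.sqrt (1 + ξ ^ 2 + 2 * η)) / 2)
        ((1 + ξ + Real.sqrt (1 + ξ ^ 2 + 2 * η)) / 2) := by
  obtain ⟨hξ0, hξ1⟩ := hξ
  obtain ⟨hηlo, hηhi⟩ := hη
  have hD : 0 ≤ 1 + ξ ^ 2 + 2 * η := by linarith
  have hs := sqrt_le_one_sub hξ1.le hηhi.le
  have hs0 := sqrt_nonneg (1 + ξ ^ 2 + 2 * η)
  change _ = Icc (zMinus ξ η) (zPlus ξ η)
  ext n₀
  simp only [mem_ofPred_eq, ← mem_range]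
  constructor
  · rintro ⟨⟨h0, h1⟩, hη⟩
    rw [range_hmf h0 h1] at hη
    exact (sub_le_iff_mem_Icc_zMinus_zPlus hD).1 hη.1
  · intro hn
    have hzPlus_le_zZero : zPlus ξ η ≤ zZero ξ η := by
      rw [← le_mul_one_sub_two_mul_iff_le_zZero hξ0, zPlus]
      nlinarith
    have h0 : 0 ≤ n₀ := by linarith [hn.1, show 0 ≤ zMinus ξ η by rw [zMinus]; linarith]
    have h1 : n₀ ≤ 1 := by linarith [hn.2, show zPlus ξ η ≤ 1 by rw [zPlus]; linarith]
    rw [range_hmf h0 h1]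
    exact ⟨⟨h0, h1⟩, (sub_le_iff_mem_Icc_zMinus_zPlus hD).2 hn,
      (le_mul_one_sub_two_mul_iff_le_zZero hξ0).2 (hn.2.trans hzPlus_le_zZero)⟩
end

section
/- Let ξ ∈ (0,1) and η ∈ (−ξ, ξ) (the P′ excited-state quantum phase). Then the energy level set L = {(n₀, θ) ∈ [0,1] × (ℝ/2πℤ) : h(ξ, n₀, φ) = η for any representative φ ∈ ℝ of θ} is a connected subset of [0,1] × (ℝ/2πℤ); in particular, above the critical energy η⋆ = −ξ there is a single phase-space trajectory per energy. -/
open Real Set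

/-- The smaller root `(ξ + c - √D) / (2c)` of `2c n² - 2(ξ + c) n + (ξ - η)`, rationalized so that
it stays correct, and continuous, at `c = 0`. -/
noncomputable def levelRoot (ξ η c : ℝ) : ℝ :=
  (ξ - η) / (ξ + c + √(ξ ^ 2 + c ^ 2 + 2 * c * η))

section
variable {ξ η c : ℝ}


lemma sq_sub_le_disc (hη : -ξ ≤ η) (hc : 0 ≤ c) : (ξ - c) ^ 2 ≤ ξ ^ 2 + c ^ 2 + 2 * c * η := by
  nlinarith [mul_nonneg hc (neg_le_iff_add_nonneg.mp hη)]

lemma abs_sub_le_sqrt_disc (hη : -ξ ≤ η) (hc : 0 ≤ c) :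
    |ξ - c| ≤ √(ξ ^ 2 + c ^ 2 + 2 * c * η) :=
  abs_le_sqrt (sq_sub_le_disc hη hc)

lemma sub_lt_sqrt_disc (hη : η ∈ Ioo (-ξ) ξ) (c : ℝ) :
    c - ξ < √(ξ ^ 2 + c ^ 2 + 2 * c * η) := by
  rcases lt_or_ge c ξ with hcξ | hξc
  · exact (sub_neg.mpr hcξ).trans_le (sqrt_nonneg _)
  · have hξ : 0 < ξ := by linarith [hη.1, hη.2]
    exact (lt_sqrt (sub_nonneg.mpr hξc)).mpr (by nlinarith [hη.1])

lemma levelRoot_denom_pos (hη : η ∈ Ioo (-ξ) ξ) (hc : 0 ≤ c) :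
    0 < ξ + c + √(ξ ^ 2 + c ^ 2 + 2 * c * η) := by
  linarith [sub_lt_sqrt_disc hη c, hη.1, hη.2]

lemma levelRoot_mul_denom (hη : η ∈ Ioo (-ξ) ξ) (hc : 0 ≤ c) :
    levelRoot ξ η c * (ξ + c + √(ξ ^ 2 + c ^ 2 + 2 * c * η)) = ξ - η :=
  div_mul_cancel₀ _ (levelRoot_denom_pos hη hc).ne'

lemma two_mul_mul_levelRoot (hη : η ∈ Ioo (-ξ) ξ) (hc : 0 ≤ c) :
    2 * c * levelRoot ξ η c = ξ + c - √(ξ ^ 2 + c ^ 2 + 2 * c * η) := by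
  have hD : 0 ≤ ξ ^ 2 + c ^ 2 + 2 * c * η := (sq_nonneg _).trans (sq_sub_le_disc hη.1.le hc)
  apply mul_right_cancel₀ (levelRoot_denom_pos hη hc).ne'
  linear_combination 2 * c * levelRoot_mul_denom hη hc + sq_sqrt hD

lemma levelRoot_mem_Icc (hη : η ∈ Ioo (-ξ) ξ) (hc : 0 ≤ c) : levelRoot ξ η c ∈ Icc 0 1 := by
  have hA := levelRoot_denom_pos hη hc
  refine ⟨div_nonneg (by linarith [hη.2]) hA.le, (div_le_one hA).mpr ?_⟩
  linarith [le_abs_self (ξ - c), abs_sub_le_sqrt_disc hη.1.le hc, hη.1]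

lemma levelRoot_energy (hη : η ∈ Ioo (-ξ) ξ) (hc : 0 ≤ c) :
    ξ * (1 - 2 * levelRoot ξ η c) - 2 * levelRoot ξ η c * (1 - levelRoot ξ η c) * c = η := by
  linear_combination -levelRoot_mul_denom hη hc + levelRoot ξ η c * two_mul_mul_levelRoot hη hc

lemma mul_levelRoot_lt (hη : η ∈ Ioo (-ξ) ξ) (hc : 0 ≤ c) : c * levelRoot ξ η c < ξ := by
  linarith [two_mul_mul_levelRoot hη hc, sub_lt_sqrt_disc hη c]

lemma energy_eq_iff_eq_levelRoot (hη : η ∈ Ioo (-ξ) ξ) (hc : 0 ≤ c) {n : ℝ} (hn : n ∈ Icc 0 1) :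
    ξ * (1 - 2 * n) - 2 * n * (1 - n) * c = η ↔ n = levelRoot ξ η c := by
  refine ⟨fun h => ?_, fun h => h ▸ levelRoot_energy hη hc⟩
  set r := levelRoot ξ η c
  have hfactor : (n - r) * (c * n - c + (c * r - ξ)) = 0 := by
    linear_combination (1 / 2 : ℝ) * h - (1 / 2 : ℝ) * levelRoot_energy hη hc
  have hneg : c * n - c + (c * r - ξ) < 0 := by
    nlinarith [mul_levelRoot_lt hη hc, mul_le_of_le_one_right hc hn.2]
  exact sub_eq_zero.mp ((mul_eq_zero.mp hfactor).resolve_right hneg.ne)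

lemma continuous_levelRoot_comp {f : ℝ → ℝ} (hη : η ∈ Ioo (-ξ) ξ) (hf : Continuous f)
    (hf0 : ∀ x, 0 ≤ f x) :
    Continuous fun x => levelRoot ξ η (f x) := by
  unfold levelRoot
  exact continuous_const.div (by fun_prop) fun x => (levelRoot_denom_pos hη (hf0 x)).ne'

end

lemma cos_eq_of_coe_eq {a b : ℝ} (h : (a : AddCircle (2 * π)) = b) : cos a = cos b := by
  rw [← cos_periodic.lift_coe, h, cos_periodic.lift_coe]

lemma hmf_eq_iff {ξ η n φ : ℝ} (hη : η ∈ Ioo (-ξ) ξ) (hn : n ∈ Icc 0 1) :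
    hmf ξ n φ = η ↔ n = levelRoot ξ η (cos φ ^ 2) :=
  energy_eq_iff_eq_levelRoot hη (sq_nonneg _) hn

lemma hmf_levelSet_eq_range {ξ η : ℝ} (hη : η ∈ Ioo (-ξ) ξ) :
    {p : ℝ × AddCircle (2 * π) |
      p.1 ∈ Icc 0 1 ∧ ∀ φ : ℝ, (φ : AddCircle (2 * π)) = p.2 → hmf ξ p.1 φ = η}
      = range fun φ : ℝ => (levelRoot ξ η (cos φ ^ 2), (φ : AddCircle (2 * π))) := by
  ext ⟨n, θ⟩
  obtain ⟨φ, rfl⟩ := QuotientAddGroup.mk_surjective θ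
  constructor
  · rintro ⟨hn, hlevel⟩
    exact ⟨φ, Prod.ext ((hmf_eq_iff hη hn).mp (hlevel φ rfl)).symm rfl⟩
  · rintro ⟨ψ, hψ⟩
    obtain ⟨rfl, hψφ⟩ := Prod.mk.inj hψ
    refine ⟨levelRoot_mem_Icc hη (sq_nonneg _), fun χ hχ => ?_⟩
    rw [hmf_eq_iff hη (levelRoot_mem_Icc hη (sq_nonneg _)), cos_eq_of_coe_eq (hχ.trans hψφ.symm)]

theorem stmt_12_general (ξ η : ℝ)
    (hη : η ∈ Set.Ioo (-ξ) ξ) :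
    IsConnected {p : ℝ × AddCircle (2 * Real.pi) |
      p.1 ∈ Set.Icc (0 : ℝ) 1 ∧
      ∀ φ : ℝ, (φ : AddCircle (2 * Real.pi)) = p.2 → hmf ξ p.1 φ = η} := by
  rw [hmf_levelSet_eq_range hη]
  exact isConnected_range <|
    (continuous_levelRoot_comp hη (by fun_prop) fun φ => sq_nonneg _).prodMk continuous_quotient_mk'

theorem stmt_12 (ξ η : ℝ) (hξ : ξ ∈ Set.Ioo (0 : ℝ) 1)
    (hη : η ∈ Set.Ioo (-ξ) ξ) :
    IsConnected {p : ℝ × AddCircle (2 * Real.pi) |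
      p.1 ∈ Set.Icc (0 : ℝ) 1 ∧
      ∀ φ : ℝ, (φ : AddCircle (2 * Real.pi)) = p.2 → hmf ξ p.1 φ = η} :=
  stmt_12_general ξ η hη
end

section
/- Let ξ ∈ (0,1) and η ∈ (−(1+ξ²)/2, −ξ) (the BA′ excited-state quantum phase). Then the energy level set L = {(n₀, θ) ∈ [0,1] × (ℝ/2πℤ) : h(ξ, n₀, φ) = η for any representative φ ∈ ℝ of θ} has exactly two connected components; i.e., below the critical energy η⋆ = −ξ each energy hypersurface consists of two disconnected phase-space trajectories. -/
open Set Real Topology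

theorem natCard_connectedComponents_eq_two_of_isClopen {X : Type*} [TopologicalSpace X]
    {U : Set X} (hU : IsClopen U) (hU₁ : IsConnected U) (hU₂ : IsConnected Uᶜ) :
    Nat.card (ConnectedComponents X) = 2 := by
  have hcomp {s : Set X} (hs : IsClopen s) (hs' : IsPreconnected s) {x : X} (hx : x ∈ s) :
      connectedComponent x = s :=
    (hs.connectedComponent_subset hx).antisymm (hs'.subset_connectedComponent hx)
  obtain ⟨u, hu⟩ := hU₁.nonempty
  obtain ⟨v, hv⟩ := hU₂.nonempty
  rw [Nat.card_eq_two_iff]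
  refine ⟨u, v, ?_, eq_univ_of_forall (ConnectedComponents.surjective_coe.forall.2 fun x ↦ ?_)⟩
  · rw [Ne, ConnectedComponents.coe_eq_coe, hcomp hU hU₁.2 hu, hcomp hU.compl hU₂.2 hv]
    exact fun h ↦ (h ▸ hu : u ∈ Uᶜ) hu
  · rw [mem_insert_iff, mem_singleton_iff, ConnectedComponents.coe_eq_coe,
      ConnectedComponents.coe_eq_coe]
    by_cases hx : x ∈ U
    · exact .inl ((hcomp hU hU₁.2 hx).trans (hcomp hU hU₁.2 hu).symm)
    · exact .inr ((hcomp hU.compl hU₂.2 hx).trans (hcomp hU.compl hU₂.2 hv).symm)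

theorem natCard_connectedComponents_union_eq_two {X : Type*} [TopologicalSpace X]
    {A B U V : Set X} (hU : IsOpen U) (hV : IsOpen V) (hUV : Disjoint U V) (hAU : A ⊆ U)
    (hBV : B ⊆ V) (hA : IsConnected A) (hB : IsConnected B) :
    Nat.card (ConnectedComponents ↥(A ∪ B)) = 2 := by
  have hconn {C : Set X} (hC : IsConnected C) (hsub : C ⊆ A ∪ B) :
      IsConnected ((↑) ⁻¹' C : Set ↥(A ∪ B)) := by
    refine ⟨?_, ?_⟩
    · obtain ⟨x, hx⟩ := hC.nonempty
      exact ⟨⟨x, hsub hx⟩, hx⟩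
    · rw [← Topology.IsInducing.subtypeVal.isPreconnected_image, Subtype.image_preimage_coe,
        inter_eq_right.2 hsub]
      exact hC.2
  have hAU' : ((↑) ⁻¹' A : Set ↥(A ∪ B)) = (↑) ⁻¹' U := by
    ext ⟨x, hx⟩
    exact ⟨fun h ↦ hAU h, fun h ↦ hx.resolve_right fun hxB ↦ hUV.notMem_of_mem_left h (hBV hxB)⟩
  have hBV' : ((↑) ⁻¹' A : Set ↥(A ∪ B))ᶜ = (↑) ⁻¹' V := by
    ext ⟨x, hx⟩
    exact ⟨fun h ↦ hBV (hx.resolve_left h), fun h hxA ↦ hUV.notMem_of_mem_left (hAU hxA) h⟩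
  have hBB' : ((↑) ⁻¹' A : Set ↥(A ∪ B))ᶜ = (↑) ⁻¹' B := by
    ext ⟨x, hx⟩
    exact ⟨hx.resolve_left, fun h hxA ↦ hUV.notMem_of_mem_left (hAU hxA) (hBV h)⟩
  refine natCard_connectedComponents_eq_two_of_isClopen ⟨?_, ?_⟩ (hconn hA subset_union_left) ?_
  · rw [← isOpen_compl_iff, hBV']
    exact hV.preimage continuous_subtype_val
  · rw [hAU']
    exact hU.preimage continuous_subtype_val
  · rw [hBB']
    exact hconn hB subset_union_right

theorem Real.Angle.isConnected_setOf_cos_eq {D : Set ℝ} {g : ℝ → ℝ} (hD : IsPreconnected D)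
    (hg : ContinuousOn g D) (hg_mem : MapsTo g D (Icc (-1) 1)) {x₀ : ℝ} (hx₀ : x₀ ∈ D)
    (hgx₀ : |g x₀| = 1) :
    IsConnected {p : ℝ × Angle | p.1 ∈ D ∧ p.2.cos = g p.1} := by
  set u : ℝ → ℝ := fun x ↦ arccos (g x)
  have hu : ContinuousOn (fun x ↦ (u x : Angle)) D :=
    continuous_coe.comp_continuousOn (continuous_arccos.comp_continuousOn hg)
  have hsplit : {p : ℝ × Angle | p.1 ∈ D ∧ p.2.cos = g p.1} =
      (fun x ↦ (x, (u x : Angle))) '' D ∪ (fun x ↦ (x, -(u x : Angle))) '' D := by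
    ext ⟨x, θ⟩
    simp only [mem_union, mem_image, Prod.mk.injEq]
    constructor
    · rintro ⟨hx, hθ⟩
      rw [← cos_arccos (hg_mem hx).1 (hg_mem hx).2, cos_eq_real_cos_iff_eq_or_eq_neg] at hθ
      exact hθ.imp (fun h ↦ ⟨x, hx, rfl, h.symm⟩) fun h ↦ ⟨x, hx, rfl, h.symm⟩
    · rintro (⟨x, hx, rfl, rfl⟩ | ⟨x, hx, rfl, rfl⟩)
      · exact ⟨hx, by rw [cos_coe, cos_arccos (hg_mem hx).1 (hg_mem hx).2]⟩
      · exact ⟨hx, by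
          rw [← coe_neg, cos_coe, Real.cos_neg, cos_arccos (hg_mem hx).1 (hg_mem hx).2]⟩
  -- the two graphs meet above `x₀`, where `arccos (g x₀)` is `0` or `π`
  have hmeet : -(u x₀ : Angle) = u x₀ := by
    rw [neg_eq_self_iff]
    rcases (abs_eq zero_le_one).1 hgx₀ with h | h
    · left; simp [u, h]
    · right; simp [u, h]
  rw [hsplit]
  refine ⟨⟨_, mem_union_left _ (mem_image_of_mem _ hx₀)⟩, ?_⟩
  refine (hD.image _ (continuousOn_id.prodMk hu)).union _ (mem_image_of_mem _ hx₀) ?_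
    (hD.image _ (continuousOn_id.prodMk hu.neg))
  exact ⟨x₀, hx₀, Prod.ext rfl hmeet⟩

section LevelSet

variable {ξ η n : ℝ}

theorem hmf_eq_of_coe_eq_coe {φ ψ : ℝ} (h : (φ : Angle) = ψ) : hmf ξ n φ = hmf ξ n ψ := by
  have hcos := congrArg Angle.cos h
  rw [Angle.cos_coe, Angle.cos_coe] at hcos
  rw [hmf, hmf, hcos]

theorem forall_coe_eq_hmf_eq_iff (φ : ℝ) :
    (∀ ψ : ℝ, (ψ : Angle) = φ → hmf ξ n ψ = η) ↔ hmf ξ n φ = η :=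
  ⟨fun h ↦ h φ rfl, fun h _ hψ ↦ (hmf_eq_of_coe_eq_coe hψ).trans h⟩

/-- The populations at which the energy `η` is attained: `min_φ hmf ξ n φ`, reached at
`cos² φ = 1`, is at most `η`. -/
def levelDomain (ξ η : ℝ) : Set ℝ := {n | ξ * (1 - 2 * n) - 2 * n * (1 - n) ≤ η}

/-- The value of `cos² φ` forced by `hmf ξ n φ = η`. -/
noncomputable def levelCosSq (ξ η n : ℝ) : ℝ := (ξ * (1 - 2 * n) - η) / (2 * n * (1 - n))

theorem ordConnected_levelDomain : (levelDomain ξ η).OrdConnected := by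
  refine ⟨fun a ha b hb x ⟨hax, hxb⟩ ↦ ?_⟩
  simp only [levelDomain, mem_ofPred_eq] at ha hb ⊢
  rcases hax.eq_or_lt with rfl | hax'
  · exact ha
  by_contra! h
  -- `Q x := ξ (1 - 2x) - 2x (1 - x) - η` is a convex quadratic:
  -- `(b - a) Q x = (b - x) Q a + (x - a) Q b - 2 (b - a) (x - a) (b - x)`
  nlinarith [mul_nonneg (mul_nonneg (sub_nonneg.2 hax) (sub_nonneg.2 hxb))
      (sub_nonneg.2 (hax.trans hxb)), mul_nonneg (sub_nonneg.2 hxb) (sub_nonneg.2 ha),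
    mul_nonneg (sub_nonneg.2 hax) (sub_nonneg.2 hb),
    mul_pos (sub_pos.2 (hax'.trans_le hxb)) (sub_pos.2 h)]

theorem mem_Ioo_of_mem_levelDomain (hξ₀ : 0 ≤ ξ) (hξ₁ : ξ ≤ 1) (hη : η < -ξ)
    (hn : n ∈ levelDomain ξ η) : n ∈ Ioo 0 1 := by
  simp only [levelDomain, mem_ofPred_eq] at hn
  constructor <;> nlinarith

theorem levelCosSq_pos (hξ : 0 ≤ ξ) (hη : η < -ξ) (hn : n ∈ Ioo 0 1) :
    0 < levelCosSq ξ η n := by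
  obtain ⟨hn₀, hn₁⟩ := hn
  exact div_pos (by nlinarith) (by nlinarith)

theorem levelCosSq_le_one (hIoo : n ∈ Ioo 0 1) (hn : n ∈ levelDomain ξ η) :
    levelCosSq ξ η n ≤ 1 := by
  obtain ⟨hn₀, hn₁⟩ := hIoo
  rw [levelCosSq, div_le_one (by nlinarith)]
  simp only [levelDomain, mem_ofPred_eq] at hn
  linarith

theorem sqrt_levelCosSq_mem_Ioc (hξ₀ : 0 ≤ ξ) (hξ₁ : ξ ≤ 1) (hη : η < -ξ)
    (hn : n ∈ levelDomain ξ η) : √(levelCosSq ξ η n) ∈ Ioc 0 1 :=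
  have hIoo := mem_Ioo_of_mem_levelDomain hξ₀ hξ₁ hη hn
  ⟨sqrt_pos.2 (levelCosSq_pos hξ₀ hη hIoo), sqrt_le_one.2 (levelCosSq_le_one hIoo hn)⟩

theorem continuousOn_levelCosSq : ContinuousOn (levelCosSq ξ η) (Ioo 0 1) :=
  ContinuousOn.div (by fun_prop) (by fun_prop) fun _ ⟨hn₀, hn₁⟩ ↦ by nlinarith

theorem exists_levelCosSq_eq_one (hξ₀ : 0 ≤ ξ) (hξ₁ : ξ ≤ 1) (hη₀ : -(1 + ξ ^ 2) / 2 ≤ η)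
    (hη₁ : η < -ξ) : ∃ n ∈ levelDomain ξ η, levelCosSq ξ η n = 1 := by
  -- a root of `ξ (1 - 2n) - 2n(1 - n) = η`; the discriminant is `1 + ξ² + 2η ≥ 0`
  set n₁ := (1 + ξ + √(1 + ξ ^ 2 + 2 * η)) / 2
  have hroot : ξ * (1 - 2 * n₁) - 2 * n₁ * (1 - n₁) = η := by
    have := sq_sqrt (by linarith : 0 ≤ 1 + ξ ^ 2 + 2 * η)
    linear_combination (1 / 2 : ℝ) * this
  have hn₁ : n₁ ∈ levelDomain ξ η := hroot.le
  obtain ⟨h₀, h₁⟩ := mem_Ioo_of_mem_levelDomain hξ₀ hξ₁ hη₁ hn₁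
  exact ⟨n₁, hn₁, (div_eq_one_iff_eq (by nlinarith)).2 (by linarith)⟩

theorem mem_Icc_and_hmf_eq_iff (hξ₀ : 0 ≤ ξ) (hξ₁ : ξ ≤ 1) (hη : η < -ξ) (φ : ℝ) :
    n ∈ Icc 0 1 ∧ hmf ξ n φ = η ↔ n ∈ levelDomain ξ η ∧ cos φ ^ 2 = levelCosSq ξ η n := by
  constructor
  · rintro ⟨⟨hn₀, hn₁⟩, hE⟩
    have hc := cos_sq_le_one φ
    have hD : n ∈ levelDomain ξ η := by
      simp only [levelDomain, mem_ofPred_eq]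
      rw [hmf] at hE
      nlinarith [mul_nonneg hn₀ (sub_nonneg.2 hn₁), sq_nonneg (cos φ)]
    obtain ⟨h₀, h₁⟩ := mem_Ioo_of_mem_levelDomain hξ₀ hξ₁ hη hD
    refine ⟨hD, ?_⟩
    rw [levelCosSq, eq_div_iff (by nlinarith), ← hE, hmf]
    ring
  · rintro ⟨hD, hc⟩
    obtain ⟨h₀, h₁⟩ := mem_Ioo_of_mem_levelDomain hξ₀ hξ₁ hη hD
    refine ⟨⟨h₀.le, h₁.le⟩, ?_⟩
    rw [hmf, hc, levelCosSq, mul_div_cancel₀ _ (by nlinarith)]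
    ring

theorem levelSet_eq_union (hξ₀ : 0 ≤ ξ) (hξ₁ : ξ ≤ 1) (hη : η < -ξ) :
    {p : ℝ × Angle | p.1 ∈ Icc 0 1 ∧ ∀ φ : ℝ, (φ : Angle) = p.2 → hmf ξ p.1 φ = η} =
      {p | p.1 ∈ levelDomain ξ η ∧ p.2.cos = √(levelCosSq ξ η p.1)} ∪
        {p | p.1 ∈ levelDomain ξ η ∧ p.2.cos = -√(levelCosSq ξ η p.1)} := by
  ext ⟨n, θ⟩
  induction θ using Angle.induction_on with
  | h φ =>
    simp only [mem_union, mem_ofPred_eq, Angle.cos_coe, forall_coe_eq_hmf_eq_iff,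
      mem_Icc_and_hmf_eq_iff hξ₀ hξ₁ hη, ← and_or_left, and_congr_right_iff]
    intro hD
    have hf := (levelCosSq_pos hξ₀ hη (mem_Ioo_of_mem_levelDomain hξ₀ hξ₁ hη hD)).le
    rw [← abs_eq (sqrt_nonneg _), ← sqrt_sq_eq_abs, sqrt_inj (sq_nonneg _) hf]

end LevelSet

theorem stmt_13 (ξ η : ℝ) (hξ : ξ ∈ Set.Ioo (0 : ℝ) 1)
    (hη : η ∈ Set.Ioo (-(1 + ξ ^ 2) / 2) (-ξ)) :
    Nat.card (ConnectedComponents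
      ({p : ℝ × AddCircle (2 * Real.pi) |
        p.1 ∈ Set.Icc (0 : ℝ) 1 ∧
        ∀ φ : ℝ, (φ : AddCircle (2 * Real.pi)) = p.2 → hmf ξ p.1 φ = η} :
          Set (ℝ × AddCircle (2 * Real.pi)))) = 2 := by
  obtain ⟨hξ₀, hξ₁⟩ := hξ
  obtain ⟨hη₀, hη₁⟩ := hη
  have hf := fun n ↦ sqrt_levelCosSq_mem_Ioc (n := n) hξ₀.le hξ₁.le hη₁
  have hf_cont : ContinuousOn (fun n ↦ √(levelCosSq ξ η n)) (levelDomain ξ η) :=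
    (continuousOn_levelCosSq.mono fun _ ↦ mem_Ioo_of_mem_levelDomain hξ₀.le hξ₁.le hη₁).sqrt
  have hD := ordConnected_levelDomain (ξ := ξ) (η := η) |>.isPreconnected
  obtain ⟨n₁, hn₁, hf₁⟩ := exists_levelCosSq_eq_one hξ₀.le hξ₁.le hη₀.le hη₁
  change Nat.card (ConnectedComponents
    ({p : ℝ × Angle | p.1 ∈ Icc 0 1 ∧ ∀ φ : ℝ, (φ : Angle) = p.2 → hmf ξ p.1 φ = η})) = 2
  rw [levelSet_eq_union hξ₀.le hξ₁.le hη₁]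
  refine natCard_connectedComponents_union_eq_two (U := {p | 0 < p.2.cos})
    (V := {p | p.2.cos < 0}) (isOpen_lt continuous_const (Angle.continuous_cos.comp continuous_snd))
    (isOpen_lt (Angle.continuous_cos.comp continuous_snd) continuous_const)
    (disjoint_left.2 fun p (h₁ : 0 < p.2.cos) (h₂ : p.2.cos < 0) ↦ lt_asymm h₁ h₂)
    (fun p ⟨hn, hp⟩ ↦ ?_) (fun p ⟨hn, hp⟩ ↦ ?_)
    (Angle.isConnected_setOf_cos_eq hD hf_cont (fun n hn ↦ ?_) hn₁ (by simp [hf₁]))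
    (Angle.isConnected_setOf_cos_eq (g := fun n ↦ -√(levelCosSq ξ η n)) hD hf_cont.neg
      (fun n hn ↦ ?_) hn₁ (by simp [hf₁]))
  · exact (hf p.1 hn).1.trans_eq hp.symm
  · exact hp.trans_lt (neg_neg_of_pos (hf p.1 hn).1)
  · exact ⟨by linarith [(hf n hn).1], (hf n hn).2⟩
  · exact ⟨by linarith [(hf n hn).2], by linarith [(hf n hn).1]⟩
end

section
/- Let ξ ∈ (0,1) and η ∈ (−ξ, ξ) (the P′ excited-state quantum phase), set x = ξ√(1+ξ²+2η), y = (x − ξ² − η)/2, and T = K(y/x)/√x. Let n₀, φ : ℝ → ℝ be differentiable with n₀(τ) ∈ [0,1] for all τ, satisfying Hamilton's equations n₀' = 4n₀(1−n₀)cosφ sinφ, φ' = 2ξ + 2(1−2n₀)cos²φ, and h(ξ, n₀(0), φ(0)) = η. Then for all τ ∈ ℝ: n₀(τ+T) = n₀(τ) and φ(τ+T) = φ(τ) + π. (The trajectory winds counterclockwise around the n₀-axis, so the winding-number order parameter is w = +1.) -/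
/-- Complete elliptic integral of the first kind,
`K m = ∫₀^{π/2} (1 - m sin²γ)^{-1/2} dγ`. -/
noncomputable def ellipticK (m : ℝ) : ℝ :=
  ∫ γ in (0 : ℝ)..(Real.pi / 2), (Real.sqrt (1 - m * Real.sin γ ^ 2))⁻¹

/-!
Energy is conserved, and on the level `h = η` with `η > -ξ` the quantity
`ξ + (1 - 2 n₀) cos² φ` is positive with square `cos⁴ φ + 2 η cos² φ + ξ²`. Hence `φ` solves the
autonomous equation `φ' = 2 √(cos⁴ φ + 2 η cos² φ + ξ²)`, whose right side is positive and
`π`-periodic, so `φ` gains exactly `π` in the time `∫₀^π dψ / φ'(ψ)`; and `n₀` is determined on the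
level set by `cos² φ`, so it returns as well. The substitution `tan ψ = r tan θ`, `r = √x / ξ`,
turns that integral into `∫₀^π dθ / (2 √x √(1 - (y/x) sin² 2θ)) = K(y/x) / √x`.
-/

open Real

lemma hmf_eq_of_hamilton_s14 {ξ : ℝ} {n₀ φ : ℝ → ℝ}
    (hn : ∀ τ, HasDerivAt n₀ (4 * n₀ τ * (1 - n₀ τ) * cos (φ τ) * sin (φ τ)) τ)
    (hφ : ∀ τ, HasDerivAt φ (2 * ξ + 2 * (1 - 2 * n₀ τ) * cos (φ τ) ^ 2) τ) (τ σ : ℝ) :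
    hmf ξ (n₀ τ) (φ τ) = hmf ξ (n₀ σ) (φ σ) := by
  have hderiv : ∀ t, HasDerivAt (fun t => hmf ξ (n₀ t) (φ t)) 0 t := by
    intro t
    have h := ((((hn t).const_mul 2).const_sub 1).const_mul ξ).sub
      ((((hn t).const_mul 2).mul ((hn t).const_sub 1)).mul (((hφ t).cos).pow 2))
    exact h.congr_deriv (by simp only [Pi.mul_apply, Pi.pow_apply]; ring)
  exact is_const_of_deriv_eq_zero (fun t => (hderiv t).differentiableAt)
    (fun t => (hderiv t).deriv) τ σ

lemma hmf_level_pos {ξ η n ψ : ℝ} (hη : -ξ < η) (hn : n ≤ 1) (h : hmf ξ n ψ = η) :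
    0 < ξ + (1 - 2 * n) * cos ψ ^ 2 := by
  have hprod : η + ξ = 2 * (1 - n) * (ξ - n * cos ψ ^ 2) := by
    rw [← h, hmf]; ring
  have h1n : 0 < 1 - n := by
    rcases hn.lt_or_eq with hn | rfl
    · linarith
    · norm_num at hprod; linarith
  have hξn : 0 < ξ - n * cos ψ ^ 2 := by nlinarith
  nlinarith [sq_nonneg (cos ψ)]

lemma hmf_level_sq {ξ η n ψ : ℝ} (h : hmf ξ n ψ = η) :
    (ξ + (1 - 2 * n) * cos ψ ^ 2) ^ 2 = cos ψ ^ 4 + 2 * η * cos ψ ^ 2 + ξ ^ 2 := by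
  rw [← h, hmf]; ring

lemma eq_of_hmf_eq_of_cos_sq_eq {ξ η n m ψ χ : ℝ} (hη : -ξ < η) (hn : n ≤ 1) (hm : m ≤ 1)
    (hnψ : hmf ξ n ψ = η) (hmχ : hmf ξ m χ = η) (hc : cos ψ ^ 2 = cos χ ^ 2) : n = m := by
  have hpos := add_pos (hmf_level_pos hη hn hnψ) (hmf_level_pos hη hm hmχ)
  have hdiff : (n - m) * (ξ + (1 - 2 * n) * cos ψ ^ 2 + (ξ + (1 - 2 * m) * cos ψ ^ 2)) = 0 := by
    rw [show (0 : ℝ) = hmf ξ m χ - hmf ξ n ψ by rw [hnψ, hmχ, sub_self], hmf, hmf, ← hc]; ring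
  rw [← hc] at hpos
  exact sub_eq_zero.mp ((mul_eq_zero.mp hdiff).resolve_right hpos.ne')

lemma map_add_integral_inv_eq_add_period {f φ : ℝ → ℝ} {p : ℝ} (hf : Continuous f)
    (hpos : ∀ ψ, 0 < f ψ) (hper : Function.Periodic f p) (hφ : ∀ τ, HasDerivAt φ (f (φ τ)) τ)
    (τ : ℝ) : φ (τ + ∫ ψ in (0 : ℝ)..p, (f ψ)⁻¹) = φ τ + p := by
  set G : ℝ → ℝ := fun v => ∫ ψ in (0 : ℝ)..v, (f ψ)⁻¹
  have hcont : Continuous fun ψ => (f ψ)⁻¹ := hf.inv₀ fun ψ => (hpos ψ).ne'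
  have hG : ∀ v, HasDerivAt G (f v)⁻¹ v := fun v =>
    hcont.integral_hasStrictDerivAt 0 v |>.hasDerivAt
  have hGmono : StrictMono G :=
    strictMono_of_deriv_pos fun v => (hG v).deriv ▸ inv_pos.mpr (hpos v)
  have hper' : Function.Periodic (fun ψ => (f ψ)⁻¹) p := fun ψ => by simp only [hper ψ]
  have hGshift : ∀ v, G (v + p) = G v + G p := fun v => by
    simp only [G]
    rw [← intervalIntegral.integral_add_adjacent_intervals (hcont.intervalIntegrable 0 v)
      (hcont.intervalIntegrable v (v + p)), hper'.intervalIntegral_add_eq v 0, zero_add]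
  have hclock : ∀ t, G (φ t) - t = G (φ 0) - 0 := by
    have hderiv : ∀ t, HasDerivAt (fun t => G (φ t) - t) 0 t := fun t => by
      have h := ((hG (φ t)).comp t (hφ t)).sub (hasDerivAt_id t)
      rwa [inv_mul_cancel₀ (hpos (φ t)).ne', sub_self] at h
    exact fun t => is_const_of_deriv_eq_zero (fun t => (hderiv t).differentiableAt)
      (fun t => (hderiv t).deriv) t 0
  apply hGmono.injective
  linarith [hclock (τ + G p), hclock τ, hGshift (φ τ)]

noncomputable def phaseSpeed (ξ η ψ : ℝ) : ℝ :=
  2 * √(cos ψ ^ 4 + 2 * η * cos ψ ^ 2 + ξ ^ 2)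

lemma phaseSpeed_of_hmf_eq {ξ η n ψ : ℝ} (hη : -ξ < η) (hn : n ≤ 1) (h : hmf ξ n ψ = η) :
    phaseSpeed ξ η ψ = 2 * ξ + 2 * (1 - 2 * n) * cos ψ ^ 2 := by
  rw [phaseSpeed, ← hmf_level_sq h, sqrt_sq (hmf_level_pos hη hn h).le]; ring

lemma phaseSpeed_pos {ξ η : ℝ} (hξ : 0 < ξ) (hη : -ξ < η) (ψ : ℝ) : 0 < phaseSpeed ξ η ψ := by
  have hc : 0 ≤ cos ψ ^ 2 := sq_nonneg _
  have hD : 0 < cos ψ ^ 4 + 2 * η * cos ψ ^ 2 + ξ ^ 2 := by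
    rcases hc.eq_or_lt with h | h
    · rw [show cos ψ ^ 4 = (cos ψ ^ 2) ^ 2 by ring, ← h]; norm_num; positivity
    · nlinarith [sq_nonneg (cos ψ ^ 2 - ξ)]
  unfold phaseSpeed; positivity

lemma continuous_phaseSpeed (ξ η : ℝ) : Continuous (phaseSpeed ξ η) := by
  unfold phaseSpeed; fun_prop

lemma phaseSpeed_periodic (ξ η : ℝ) : Function.Periodic (phaseSpeed ξ η) π := fun ψ => by
  simp only [phaseSpeed, cos_add_pi, Even.neg_pow (by decide : Even 2),
    Even.neg_pow (by decide : Even 4)]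

lemma one_sub_mul_sin_sq_pos {m : ℝ} (hm : m < 1) (u : ℝ) : 0 < 1 - m * sin u ^ 2 := by
  rcases le_or_gt 0 m with h | h
  · nlinarith [sin_sq_le_one u]
  · nlinarith [sq_nonneg (sin u)]

lemma integral_inv_sqrt_one_sub_mul_sin_two_mul_sq {m : ℝ} (hm : m < 1) :
    ∫ θ in (0 : ℝ)..π, (√(1 - m * sin (2 * θ) ^ 2))⁻¹ = 2 * ellipticK m := by
  set k : ℝ → ℝ := fun u => (√(1 - m * sin u ^ 2))⁻¹
  have hk : Continuous k := (by fun_prop : Continuous fun u => √(1 - m * sin u ^ 2)).inv₀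
    fun u => (sqrt_pos.mpr (one_sub_mul_sin_sq_pos hm u)).ne'
  have hint : ∀ a b, IntervalIntegrable k MeasureTheory.volume a b := hk.intervalIntegrable
  have hper : Function.Periodic k π := fun u => by simp only [k, sin_add_pi, neg_sq]
  have hhalf : ∫ u in (π / 2)..π, k u = ellipticK m := by
    have h := intervalIntegral.integral_comp_sub_left k π (a := 0) (b := π / 2)
    rw [sub_zero, sub_half] at h
    rw [← h, ellipticK]
    exact intervalIntegral.integral_congr fun u _ => by simp only [k, sin_pi_sub]
  have hfull : ∫ u in (0 : ℝ)..π, k u = 2 * ellipticK m := by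
    rw [← intervalIntegral.integral_add_adjacent_intervals (hint 0 (π / 2)) (hint (π / 2) π),
      hhalf, ellipticK]
    ring
  calc ∫ θ in (0 : ℝ)..π, k (2 * θ)
      = 2⁻¹ * ((∫ u in (0 : ℝ)..π, k u) + ∫ u in π..π + π, k u) := by
        rw [intervalIntegral.integral_comp_mul_left _ two_ne_zero, smul_eq_mul, mul_zero, two_mul,
          intervalIntegral.integral_add_adjacent_intervals (hint 0 π) (hint π (π + π))]
    _ = 2 * ellipticK m := by
        rw [hper.intervalIntegral_add_eq π 0, zero_add, hfull]; ring

-- The branch of `arctan (r tan θ)` through `0`, continuous on all of `ℝ`.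
noncomputable def stretchAngle (r θ : ℝ) : ℝ :=
  θ + arctan ((r - 1) * sin θ * cos θ / (cos θ ^ 2 + r * sin θ ^ 2))

lemma cos_sq_add_mul_sin_sq_pos {a : ℝ} (ha : 0 < a) (θ : ℝ) : 0 < cos θ ^ 2 + a * sin θ ^ 2 := by
  rcases (sq_nonneg (cos θ)).eq_or_lt with h | h
  · nlinarith [sin_sq_add_cos_sq θ]
  · nlinarith [sq_nonneg (sin θ)]

lemma hasDerivAt_stretchAngle {r : ℝ} (hr : 0 < r) (θ : ℝ) :
    HasDerivAt (stretchAngle r) (r / (cos θ ^ 2 + r ^ 2 * sin θ ^ 2)) θ := by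
  have hP := cos_sq_add_mul_sin_sq_pos hr θ
  have hcs := sin_sq_add_cos_sq θ
  have hquot : HasDerivAt (fun t => (r - 1) * sin t * cos t / (cos t ^ 2 + r * sin t ^ 2))
      ((r - 1) * ((cos θ ^ 2 - sin θ ^ 2) * (cos θ ^ 2 + r * sin θ ^ 2)
        - 2 * (r - 1) * sin θ ^ 2 * cos θ ^ 2) / (cos θ ^ 2 + r * sin θ ^ 2) ^ 2) θ := by
    have h := (((hasDerivAt_sin θ).const_mul (r - 1)).mul (hasDerivAt_cos θ)).div
      (((hasDerivAt_cos θ).pow 2).add (((hasDerivAt_sin θ).pow 2).const_mul r)) hP.ne'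
    exact h.congr_deriv (by simp only [Pi.mul_apply, Pi.add_apply, Pi.pow_apply]; ring)
  have hQ := (cos_sq_add_mul_sin_sq_pos (pow_pos hr 2) θ).ne'
  refine ((hasDerivAt_id θ).add hquot.arctan).congr_deriv ?_
  field_simp
  linear_combination r * (cos θ ^ 2 + r ^ 2 * sin θ ^ 2) * (cos θ ^ 2 + sin θ ^ 2) * hcs

lemma cos_stretchAngle_sq {r : ℝ} (hr : 0 < r) (θ : ℝ) :
    cos (stretchAngle r θ) ^ 2 = cos θ ^ 2 / (cos θ ^ 2 + r ^ 2 * sin θ ^ 2) := by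
  have hP := (cos_sq_add_mul_sin_sq_pos hr θ).ne'
  have hQ := (cos_sq_add_mul_sin_sq_pos (pow_pos hr 2) θ).ne'
  have hcs := sin_sq_add_cos_sq θ
  have hβ : 1 + ((r - 1) * sin θ * cos θ / (cos θ ^ 2 + r * sin θ ^ 2)) ^ 2 =
      (cos θ ^ 2 + r ^ 2 * sin θ ^ 2) / (cos θ ^ 2 + r * sin θ ^ 2) ^ 2 := by
    rw [eq_div_iff (pow_ne_zero 2 hP), add_mul, div_pow, div_mul_cancel₀ _ (pow_ne_zero 2 hP)]
    linear_combination (cos θ ^ 2 + r ^ 2 * sin θ ^ 2) * hcs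
  have hcβ : cos θ - sin θ * ((r - 1) * sin θ * cos θ / (cos θ ^ 2 + r * sin θ ^ 2)) =
      cos θ / (cos θ ^ 2 + r * sin θ ^ 2) := by
    rw [eq_div_iff hP, sub_mul, mul_div_assoc', div_mul_cancel₀ _ hP]
    linear_combination cos θ * hcs
  rw [stretchAngle, cos_add, cos_arctan, sin_arctan, mul_one_div, mul_div_assoc', ← sub_div,
    div_pow, sq_sqrt (by positivity), hβ, hcβ]
  field_simp

lemma phaseSpeed_stretchAngle {ξ η r x y : ℝ} (hr : 0 < r) (hx : x = ξ ^ 2 * r ^ 2)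
    (hr4 : ξ ^ 2 * r ^ 4 = 1 + ξ ^ 2 + 2 * η) (hy : y = (x - ξ ^ 2 - η) / 2) (θ : ℝ) :
    phaseSpeed ξ η (stretchAngle r θ) =
      2 * r * √(x - y * sin (2 * θ) ^ 2) / (cos θ ^ 2 + r ^ 2 * sin θ ^ 2) := by
  have hQ := cos_sq_add_mul_sin_sq_pos (pow_pos hr 2) θ
  have hcs := sin_sq_add_cos_sq θ
  have hD : cos (stretchAngle r θ) ^ 4 + 2 * η * cos (stretchAngle r θ) ^ 2 + ξ ^ 2 =
      (x - y * sin (2 * θ) ^ 2) * (r / (cos θ ^ 2 + r ^ 2 * sin θ ^ 2)) ^ 2 := by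
    rw [show cos (stretchAngle r θ) ^ 4 = (cos (stretchAngle r θ) ^ 2) ^ 2 by ring,
      cos_stretchAngle_sq hr, sin_two_mul, hy, hx]
    field_simp
    linear_combination (-cos θ ^ 4) * hr4 + r ^ 4 * ξ ^ 2 * (1 + cos θ ^ 2 + sin θ ^ 2) * hcs
  rw [phaseSpeed, hD, sqrt_mul' _ (sq_nonneg _), sqrt_sq (by positivity)]
  ring

lemma integral_inv_phaseSpeed {ξ η x y : ℝ} (hξ : 0 < ξ) (hη : -ξ < η)
    (hx : x = ξ * √(1 + ξ ^ 2 + 2 * η)) (hy : y = (x - ξ ^ 2 - η) / 2) :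
    ∫ ψ in (0 : ℝ)..π, (phaseSpeed ξ η ψ)⁻¹ = ellipticK (y / x) / √x := by
  have hA : 0 < 1 + ξ ^ 2 + 2 * η := by nlinarith [sq_nonneg (1 - ξ)]
  have hx0 : 0 < x := hx ▸ mul_pos hξ (sqrt_pos.mpr hA)
  have hx2 : x ^ 2 = ξ ^ 2 * (1 + ξ ^ 2 + 2 * η) := by rw [hx, mul_pow, sq_sqrt hA.le]
  have hm : y / x < 1 := by
    rw [div_lt_one hx0, hy]
    nlinarith [sq_nonneg (1 - ξ), sq_nonneg (x + ξ ^ 2 + η)]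
  set r := √x / ξ
  have hr : 0 < r := div_pos (sqrt_pos.mpr hx0) hξ
  have hxr : x = ξ ^ 2 * r ^ 2 := by rw [div_pow, sq_sqrt hx0.le]; field_simp
  have hr4 : ξ ^ 2 * r ^ 4 = 1 + ξ ^ 2 + 2 * η := by
    refine mul_left_cancel₀ (pow_ne_zero 2 hξ.ne') ?_
    linear_combination hx2 - (x + ξ ^ 2 * r ^ 2) * hxr
  have hQ : ∀ θ, 0 < cos θ ^ 2 + r ^ 2 * sin θ ^ 2 := cos_sq_add_mul_sin_sq_pos (pow_pos hr 2)
  calc ∫ ψ in (0 : ℝ)..π, (phaseSpeed ξ η ψ)⁻¹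
      = ∫ θ in (0 : ℝ)..π, (phaseSpeed ξ η (stretchAngle r θ))⁻¹ *
          (r / (cos θ ^ 2 + r ^ 2 * sin θ ^ 2)) := by
        have hπ : stretchAngle r π = π := by simp [stretchAngle]
        have h0 : stretchAngle r 0 = 0 := by simp [stretchAngle]
        have hsub := intervalIntegral.integral_comp_mul_deriv (a := 0) (b := π)
          (g := fun ψ => (phaseSpeed ξ η ψ)⁻¹) (fun θ _ => hasDerivAt_stretchAngle hr θ)
          (continuous_const.div (by fun_prop) fun θ => (hQ θ).ne').continuousOn
          ((continuous_phaseSpeed ξ η).inv₀ fun ψ => (phaseSpeed_pos hξ hη ψ).ne')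
        rw [hπ, h0] at hsub
        exact hsub.symm
    _ = ∫ θ in (0 : ℝ)..π, (2 * √x)⁻¹ * (√(1 - y / x * sin (2 * θ) ^ 2))⁻¹ := by
        refine intervalIntegral.integral_congr fun θ _ => ?_
        have hsplit : x - y * sin (2 * θ) ^ 2 = x * (1 - y / x * sin (2 * θ) ^ 2) := by
          field_simp
        have hWθ := sqrt_pos.mpr (one_sub_mul_sin_sq_pos hm (2 * θ))
        have hQθ := (hQ θ).ne'
        rw [phaseSpeed_stretchAngle hr hxr hr4 hy, hsplit, sqrt_mul hx0.le]
        field_simp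
    _ = ellipticK (y / x) / √x := by
        rw [intervalIntegral.integral_const_mul, integral_inv_sqrt_one_sub_mul_sin_two_mul_sq hm]
        field_simp

theorem stmt_14 (ξ η : ℝ) (hξ : ξ ∈ Set.Ioo (0 : ℝ) 1)
    (hη : η ∈ Set.Ioo (-ξ) ξ)
    (x y T : ℝ) (hx : x = ξ * Real.sqrt (1 + ξ ^ 2 + 2 * η))
    (hy : y = (x - ξ ^ 2 - η) / 2)
    (hT : T = ellipticK (y / x) / Real.sqrt x)
    (n₀ φ : ℝ → ℝ) (hn : Differentiable ℝ n₀) (hφ : Differentiable ℝ φ)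
    (hrange : ∀ τ, n₀ τ ∈ Set.Icc (0 : ℝ) 1)
    (heq1 : ∀ τ, deriv n₀ τ =
      4 * n₀ τ * (1 - n₀ τ) * Real.cos (φ τ) * Real.sin (φ τ))
    (heq2 : ∀ τ, deriv φ τ =
      2 * ξ + 2 * (1 - 2 * n₀ τ) * Real.cos (φ τ) ^ 2)
    (henergy : hmf ξ (n₀ 0) (φ 0) = η) :
    ∀ τ : ℝ, n₀ (τ + T) = n₀ τ ∧ φ (τ + T) = φ τ + Real.pi := by
  obtain ⟨hηξ, -⟩ := hη
  have hn' : ∀ τ, HasDerivAt n₀ _ τ := fun τ => heq1 τ ▸ (hn τ).hasDerivAt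
  have hφ' : ∀ τ, HasDerivAt φ _ τ := fun τ => heq2 τ ▸ (hφ τ).hasDerivAt
  have hlevel : ∀ τ, hmf ξ (n₀ τ) (φ τ) = η := fun τ =>
    (hmf_eq_of_hamilton_s14 hn' hφ' τ 0).trans henergy
  have hspeed : ∀ τ, HasDerivAt φ (phaseSpeed ξ η (φ τ)) τ := fun τ => by
    rw [phaseSpeed_of_hmf_eq hηξ (hrange τ).2 (hlevel τ)]
    exact hφ' τ
  have hshift : ∀ τ, φ (τ + T) = φ τ + π := fun τ => by
    rw [hT, ← integral_inv_phaseSpeed hξ.1 hηξ hx hy]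
    exact map_add_integral_inv_eq_add_period (continuous_phaseSpeed ξ η)
      (phaseSpeed_pos hξ.1 hηξ) (phaseSpeed_periodic ξ η) hspeed τ
  refine fun τ => ⟨eq_of_hmf_eq_of_cos_sq_eq hηξ (hrange _).2 (hrange τ).2 (hlevel _) (hlevel τ)
    ?_, hshift τ⟩
  rw [hshift τ, cos_add_pi, neg_sq]
end
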